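/- arXiv:2502.11839 — 2 statements merged into one kernel-verified Lean document; each statement's English description precedes it below -/
import Mathlib

section
/- If N is a normal subgroup of a group G such that both N and G/N are ℚ-perfect (have torsion abelianizations), then G is ℚ-perfect. -/
theorem Qperfect_of_extension {G : Type*} [Group G] (N : Subgroup G) [N.Normal]
    (hN : Monoid.IsTorsion (Abelianization N))
    (hQ : Monoid.IsTorsion (Abelianization (G ⧸ N))) :
    Monoid.IsTorsion (Abelianization G) := by
  intro x
  obtain ⟨g, rfl⟩ : ∃ g, Abelianization.of g = x := by
    exact QuotientGroup.induction_on x fun g => ⟨g, rfl⟩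
  -- get n from torsion of Abelianization (G/N)
  obtain ⟨n, hn, hgn⟩ := (hQ (Abelianization.of (QuotientGroup.mk g))).exists_pow_eq_one
  have h1 : Abelianization.of (QuotientGroup.mk (g ^ n) : G ⧸ N) = 1 := by
    rw [QuotientGroup.mk_pow, map_pow]
    exact hgn
  -- of x = 1 means mk (g^n) ∈ commutator (G/N)
  have h2 : (QuotientGroup.mk (g ^ n) : G ⧸ N) ∈ commutator (G ⧸ N) := by
    rwa [← QuotientGroup.eq_one_iff]
  -- commutator of quotient is image of commutator
  have h3 : commutator (G ⧸ N) = Subgroup.map (QuotientGroup.mk' N) (commutator G) := by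
    rw [commutator, commutator, Subgroup.map_commutator,
      Subgroup.map_top_of_surjective _ (QuotientGroup.mk'_surjective N)]
  rw [h3] at h2
  obtain ⟨c, hc, hceq⟩ := h2
  -- m := c⁻¹ * g^n ∈ N
  have hm : c⁻¹ * g ^ n ∈ N := by
    have : (QuotientGroup.mk (c⁻¹ * g ^ n) : G ⧸ N) = 1 := by
      rw [QuotientGroup.mk_mul]
      simp only [QuotientGroup.mk_inv]
      rw [show (QuotientGroup.mk c : G ⧸ N) = QuotientGroup.mk (g ^ n) from hceq]
      group
    rwa [QuotientGroup.eq_one_iff] at this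
  set m : N := ⟨c⁻¹ * g ^ n, hm⟩ with hmdef
  -- of (g^n) = of m in Abelianization G
  have hofc : Abelianization.of c = 1 := (QuotientGroup.eq_one_iff c).mpr hc
  have h4 : Abelianization.of (g ^ n) = Abelianization.of (m : G) := by
    have : Abelianization.of (c * (c⁻¹ * g ^ n)) = Abelianization.of (g ^ n) := by
      group
    rw [← this, map_mul, hofc, one_mul]
  -- torsion of Abelianization N
  obtain ⟨k, hk, hmk⟩ := (hN (Abelianization.of m)).exists_pow_eq_one
  have h5 : Abelianization.of (m : G) ^ k = 1 := by
    have := congrArg (Abelianization.map N.subtype) hmk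
    rw [map_pow, map_one] at this
    simpa [Abelianization.map_of] using this
  refine isOfFinOrder_iff_pow_eq_one.mpr ⟨n * k, Nat.mul_pos hn hk, ?_⟩
  rw [pow_mul, ← map_pow, h4, map_pow] at *
  exact h5
end

section
/- The subgroup of a group G generated by all of its ℚ-perfect subgroups is itself ℚ-perfect, and it is a normal subgroup of G. Hence every group has a maximal normal ℚ-perfect subgroup containing all ℚ-perfect subgroups. -/
open Subgroup

private lemma isTorsion_of_mulEquiv {A B : Type*} [Group A] [Group B] (e : A ≃* B)
    (h : Monoid.IsTorsion A) : Monoid.IsTorsion B :=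
  fun b => by
    obtain ⟨a, rfl⟩ := e.surjective b
    exact e.toMonoidHom.isOfFinOrder (h a)

private lemma of_surjective' {A : Type*} [Group A] :
    Function.Surjective (Abelianization.of : A →* Abelianization A) :=
  fun x => Quotient.exists_rep x

/-- The subgroup generated by all ℚ-perfect subgroups is ℚ-perfect and normal;
hence it is a maximal normal ℚ-perfect subgroup containing all ℚ-perfect subgroups. -/
theorem Qperfect_radical (G : Type*) [Group G] :
    Monoid.IsTorsion
        (Abelianization (⨆ (H : Subgroup G)
          (_ : Monoid.IsTorsion (Abelianization H)), H : Subgroup G)) ∧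
      (⨆ (H : Subgroup G) (_ : Monoid.IsTorsion (Abelianization H)), H).Normal ∧
      ∀ H : Subgroup G, Monoid.IsTorsion (Abelianization H) →
        H ≤ ⨆ (H : Subgroup G) (_ : Monoid.IsTorsion (Abelianization H)), H := by
  set R : Subgroup G := ⨆ (H : Subgroup G) (_ : Monoid.IsTorsion (Abelianization H)), H with hRdef
  have hle : ∀ H : Subgroup G, Monoid.IsTorsion (Abelianization H) → H ≤ R := fun H hH =>
    le_iSup₂ (f := fun (H : Subgroup G) (_ : Monoid.IsTorsion (Abelianization H)) => H) H hH
  -- rewrite as a sup over a subtype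
  set S : {H : Subgroup G // Monoid.IsTorsion (Abelianization H)} → Subgroup G :=
    fun i => i.1 with hS
  have hR : R = ⨆ i, S i := by rw [hRdef, iSup_subtype']
  refine ⟨?_, ?_, hle⟩
  · -- torsion
    intro x
    obtain ⟨y, rfl⟩ := of_surjective' x
    obtain ⟨g, hg⟩ := y
    have hg' : g ∈ ⨆ i, S i := hR ▸ hg
    revert hg
    refine Subgroup.iSup_induction' (C := fun g hg =>
        ∀ hg' : g ∈ R, IsOfFinOrder (Abelianization.of (⟨g, hg'⟩ : R))) S ?_ ?_ ?_ hg'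
    · intro i x hx _
      have hiR : i.1 ≤ R := hle i.1 i.2
      set φ : Abelianization i.1 →* Abelianization R :=
        Abelianization.lift ((Abelianization.of).comp (Subgroup.inclusion hiR))
      have : Abelianization.of (⟨x, hiR hx⟩ : R) = φ (Abelianization.of (⟨x, hx⟩ : i.1)) := rfl
      rw [this]
      exact φ.isOfFinOrder (i.2 _)
    · intro _
      have : Abelianization.of (⟨(1:G), R.one_mem⟩ : R) = 1 := by
        rw [show ((⟨(1:G), R.one_mem⟩ : R)) = 1 from rfl, map_one]
      rw [this]
      exact IsOfFinOrder.one
    · intro x y hx hy ihx ihy hxy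
      have : (⟨x * y, hxy⟩ : R) = ⟨x, hR ▸ hx⟩ * ⟨y, hR ▸ hy⟩ := rfl
      rw [this, map_mul]
      exact (ihx _).mul (ihy _)
  · -- normal
    constructor
    intro n hn c
    have hn' : n ∈ ⨆ i, S i := hR ▸ hn
    refine Subgroup.iSup_induction' (C := fun n _ => c * n * c⁻¹ ∈ R) S ?_ (by simpa using R.one_mem) ?_ hn'
    · intro i x hx
      -- conjugate subgroup is also ℚ-perfect
      have key : Monoid.IsTorsion (Abelianization (i.1.map (MulAut.conj c).toMonoidHom)) :=
        isTorsion_of_mulEquiv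
          (((MulAut.conj c).subgroupMap i.1).abelianizationCongr) i.2
      have hmem : c * x * c⁻¹ ∈ i.1.map (MulAut.conj c).toMonoidHom :=
        ⟨x, hx, rfl⟩
      exact hle _ key hmem
    · intro x y _ _ ihx ihy
      have : c * (x * y) * c⁻¹ = (c * x * c⁻¹) * (c * y * c⁻¹) := by group
      rw [this]
      exact R.mul_mem ihx ihy
end
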